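/- In the graph 𝒢(v0), the distance from v0 (in the first copy) to any vertex of V ⊔ V' is at most 2·Diam(G) + 1; equivalently, the eccentricity of v0 in 𝒢(v0) is at most 2·Diam(G) + 1. -/

import Mathlib

open SimpleGraph Sum

variable {V : Type*}

/-- The bipartite double construction `𝒢(v0)` of `G` with respect to `v0`: two copies of `V`;
every non-cross edge of `G` is kept inside each copy, and every cross edge `{u,w}`
(i.e. `d(v0,u) = d(v0,w)`) is replaced by the two edges `{u,w′}` and `{u′,w}` between the copies. -/
def doubleCover (G : SimpleGraph V) (v0 : V) : SimpleGraph (V ⊕ V) where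
  Adj x y :=
    match x, y with
    | inl u, inl w => G.Adj u w ∧ G.dist v0 u ≠ G.dist v0 w
    | inr u, inr w => G.Adj u w ∧ G.dist v0 u ≠ G.dist v0 w
    | inl u, inr w => G.Adj u w ∧ G.dist v0 u = G.dist v0 w
    | inr u, inl w => G.Adj u w ∧ G.dist v0 u = G.dist v0 w
  symm := ⟨by
    rintro (u|u) (w|w) ⟨h1, h2⟩ <;> exact ⟨h1.symm, by omega⟩⟩
  loopless := ⟨by
    rintro (u|u) ⟨h, _⟩ <;> exact G.ne_of_adj h rfl⟩

/-!
Walks of `G` lift to `𝒢(v0)`: over an edge `{a,b}` each vertex over `a` has exactly one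
neighbour over `b`. A shortest walk from `v0` uses no cross edge, so it lifts inside the first
copy; a walk from `inl v0` that ends in the second copy must use a cross edge `{a,b}`. To reach
`inr u`, lift a shortest walk from `u` to `b` starting at `inr u`: it ends at `inl b`, which is
`d(v0,b)` steps from `inl v0`, or at `inr b`, which is reached through `inl a`. Either way the
walk has length at most `2·Diam(G) + 1`.
-/

namespace SimpleGraph

variable {G : SimpleGraph V} {v0 : V}

theorem doubleCover_exists_adj_of_adj {a b : V} (hab : G.Adj a b) (x : V ⊕ V)
    (hx : x.elim id id = a) : ∃ y : V ⊕ V, y.elim id id = b ∧ (doubleCover G v0).Adj x y := by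
  by_cases hd : G.dist v0 a = G.dist v0 b <;> rcases x with u | u <;> subst hx
  exacts [⟨inr b, rfl, hab, hd⟩, ⟨inl b, rfl, hab, hd⟩,
    ⟨inl b, rfl, hab, hd⟩, ⟨inr b, rfl, hab, hd⟩]

theorem doubleCover_exists_walk_lift {a b : V} (q : G.Walk a b) (x : V ⊕ V)
    (hx : x.elim id id = a) :
    ∃ y : V ⊕ V, y.elim id id = b ∧
      ∃ W : (doubleCover G v0).Walk x y, W.length = q.length := by
  induction q generalizing x with
  | nil => exact ⟨x, hx, .nil, rfl⟩
  | cons hac _ ih =>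
    obtain ⟨z, hz, hxz⟩ := doubleCover_exists_adj_of_adj hac x hx
    obtain ⟨y, hy, W, hW⟩ := ih z hz
    exact ⟨y, hy, .cons hxz W, by simp [hW]⟩

theorem doubleCover_exists_walk_inl_of_length_eq_dist {u : V} (p : G.Walk u v0)
    (hp : p.length = G.dist u v0) :
    ∃ W : (doubleCover G v0).Walk (inl u) (inl v0), W.length = p.length := by
  induction p with
  | nil => exact ⟨.nil, rfl⟩
  | @cons u z w huz q ih =>
    simp only [Walk.length_cons] at hp ⊢
    have hq : q.length = G.dist z w := by
      have := dist_le q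
      have := huz.reachable.dist_triangle_left w
      have := dist_eq_one_iff_adj.mpr huz
      omega
    have hdist : G.dist w u ≠ G.dist w z := by
      rw [dist_comm, dist_comm (u := w)]
      omega
    obtain ⟨W, hW⟩ := ih hq
    exact ⟨.cons (show (doubleCover G w).Adj (inl u) (inl z) from ⟨huz, hdist⟩) W, by simp [hW]⟩

theorem doubleCover_exists_walk_inl_length_eq_dist {u : V} (h : G.Reachable v0 u) :
    ∃ W : (doubleCover G v0).Walk (inl v0) (inl u), W.length = G.dist v0 u := by
  obtain ⟨p, hp⟩ := h.symm.exists_walk_length_eq_dist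
  obtain ⟨W, hW⟩ := doubleCover_exists_walk_inl_of_length_eq_dist p hp
  exact ⟨W.reverse, by rw [Walk.length_reverse, hW, hp, dist_comm]⟩

theorem doubleCover_exists_cross_of_reachable {u w : V}
    (h : (doubleCover G v0).Reachable (inl u) (inr w)) :
    ∃ a b, G.Adj a b ∧ G.dist v0 a = G.dist v0 b := by
  obtain ⟨W⟩ := h
  obtain ⟨⟨⟨x, y⟩, hxy⟩, -, hx, hy⟩ :=
    W.exists_boundary_dart (Set.range inl) ⟨u, rfl⟩ (by simp)
  obtain ⟨a, rfl⟩ := hx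
  obtain ⟨b, rfl⟩ : ∃ b, y = inr b := by
    rcases y with b | b
    exacts [absurd ⟨b, rfl⟩ hy, ⟨b, rfl⟩]
  exact ⟨a, b, hxy⟩

theorem doubleCover_dist_inl_inr_le (hG : G.Connected) {D : ℕ} (hD : ∀ a b, G.dist a b ≤ D)
    {u : V} (h : (doubleCover G v0).Reachable (inl v0) (inr u)) :
    (doubleCover G v0).dist (inl v0) (inr u) ≤ 2 * D + 1 := by
  obtain ⟨a, b, hab, hd⟩ := doubleCover_exists_cross_of_reachable h
  obtain ⟨Q, hQ⟩ := hG.exists_walk_length_eq_dist u b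
  obtain ⟨y, hy, W, hW⟩ := doubleCover_exists_walk_lift (v0 := v0) Q (inr u) rfl
  rcases y with b' | b' <;> obtain rfl : b = b' := hy.symm
  · obtain ⟨Wb, hWb⟩ := doubleCover_exists_walk_inl_length_eq_dist (v0 := v0) (hG v0 b)
    calc _ ≤ (Wb.append W.reverse).length := dist_le _
      _ = G.dist v0 b + G.dist u b := by simp [hWb, hW, hQ]
      _ ≤ 2 * D + 1 := by linarith [hD v0 b, hD u b]
  · obtain ⟨Wa, hWa⟩ := doubleCover_exists_walk_inl_length_eq_dist (v0 := v0) (hG v0 a)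
    have hcross : (doubleCover G v0).Adj (inl a) (inr b) := ⟨hab, hd⟩
    calc _ ≤ (Wa.append (.cons hcross W.reverse)).length := dist_le _
      _ = G.dist v0 a + 1 + G.dist u b := by simp [hWa, hW, hQ]; ring
      _ ≤ 2 * D + 1 := by linarith [hD v0 a, hD u b]

end SimpleGraph

/-- Every vertex of `𝒢(v0)` is at distance at most `2·Diam(G) + 1` from (the first copy of)
`v0`; i.e. the eccentricity of `v0` in `𝒢(v0)` is at most `2·Diam(G) + 1`. -/
theorem doubleCover_eccentricity [Fintype V] (G : SimpleGraph V) (hG : G.Connected) (v0 : V)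
    (x : V ⊕ V) :
    (doubleCover G v0).dist (inl v0) x ≤ 2 * G.diam + 1 := by
  have : Nonempty V := ⟨v0⟩
  have hdiam : ∀ a b : V, G.dist a b ≤ G.diam :=
    fun _ _ ↦ dist_le_diam (connected_iff_ediam_ne_top.mp hG)
  rcases x with u | u
  · obtain ⟨W, hW⟩ := doubleCover_exists_walk_inl_length_eq_dist (hG v0 u)
    calc (doubleCover G v0).dist (inl v0) (inl u) ≤ W.length := dist_le W
      _ ≤ 2 * G.diam + 1 := by linarith [hdiam v0 u]
  · by_cases h : (doubleCover G v0).Reachable (inl v0) (inr u)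
    · exact doubleCover_dist_inl_inr_le hG hdiam h
    · rw [dist_eq_zero_of_not_reachable h]
      omega
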